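/- arXiv:2510.05642 — 2 statements merged into one kernel-verified Lean document; each statement's English description precedes it below -/
import Mathlib

section
/- Suppose γ ∈ (0,1) satisfies f(γ) = 0. Then the process Y_n = g(X_n), n ≥ 0, is a submartingale with respect to the filtration generated by (ξ_1, …, ξ_n): for every n, 𝔼[Y_{n+1} | 𝓕_n] ≥ Y_n almost surely, with equality in the conditional-expectation inequality on the event {X_n = 0}. -/
open MeasureTheory ProbabilityTheory Finset

/-! With `h x = (1 - γ^x) / (1 - γ)` the scale function is `g = h - (1 - γ^·)⁺`, and `h` satisfies
`h (x + i) = h x + γ^x h i`; subadditivity of the positive part turns this into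
`g (x + i) - g x ≥ γ^x g i`. Averaging over the step law gives
`𝔼 g (x + ξ) - g x ≥ γ^x 𝔼 g ξ = γ^x f γ = 0`, with equality at `x = 0`. Since `ξ_{n+1}` is
independent of `𝓕_n` and takes finitely many values, `𝔼[g (X_n + ξ_{n+1}) | 𝓕_n]` is the
`p`-average of `i ↦ g (X_n + i)`. -/

lemma sum_Icc_one_pow {γ : ℝ} (hγ : γ ≠ 1) (n : ℕ) :
    ∑ i ∈ Icc 1 n, γ ^ i = (γ - γ ^ (n + 1)) / (1 - γ) := by
  rw [← Ico_add_one_right_eq_Icc, geom_sum_Ico' hγ (by omega), pow_one]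

noncomputable def scaleFun (γ : ℝ) (x : ℤ) : ℝ := (1 - γ ^ x) / (1 - γ) - max 0 (1 - γ ^ x)

lemma eq_scaleFun {γ : ℝ} (hγ0 : 0 < γ) (hγ1 : γ < 1) {g : ℤ → ℝ}
    (hg_pos : ∀ x : ℤ, 0 < x → g x = ∑ i ∈ Icc 1 x.toNat, γ ^ i)
    (hg_zero : g 0 = 0)
    (hg_neg : ∀ x : ℤ, x < 0 → g x = -∑ i ∈ Icc 1 (-x).toNat, γ ^ (-(i : ℤ))) :
    g = scaleFun γ := by
  have hγ0' : γ ≠ 0 := hγ0.ne'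
  have hne : 1 - γ ≠ 0 := sub_ne_zero.2 hγ1.ne'
  have hne' : γ - 1 ≠ 0 := sub_ne_zero.2 hγ1.ne
  funext x
  rcases lt_trichotomy x 0 with hx | rfl | hx
  · obtain ⟨n, rfl⟩ : ∃ n : ℕ, x = -n := ⟨(-x).toNat, by omega⟩
    have hpow : 1 ≤ γ ^ (-(n : ℤ)) := one_le_zpow_of_nonpos₀ hγ0 hγ1.le (by omega)
    rw [hg_neg _ hx, scaleFun, max_eq_left (by linarith), sub_zero]
    simp only [neg_neg, Int.toNat_natCast, zpow_neg, zpow_natCast, ← inv_pow,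
      sum_Icc_one_pow (inv_ne_one.2 hγ1.ne)]
    simp only [inv_pow]
    field_simp
    ring
  · simp [hg_zero, scaleFun]
  · obtain ⟨n, rfl⟩ : ∃ n : ℕ, x = n := ⟨x.toNat, by omega⟩
    have hpow : γ ^ (n : ℤ) < 1 := zpow_lt_one₀ hγ0 hγ1 hx
    rw [hg_pos _ hx, Int.toNat_natCast, sum_Icc_one_pow hγ1.ne, scaleFun,
      max_eq_right (by linarith), zpow_natCast]
    field_simp
    ring

lemma scaleFun_add_sub_ge {γ : ℝ} (hγ0 : 0 < γ) (x i : ℤ) :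
    γ ^ x * scaleFun γ i ≤ scaleFun γ (x + i) - scaleFun γ x := by
  have hx : 0 ≤ γ ^ x := by positivity
  have hpos : max 0 (1 - γ ^ (x + i)) ≤ max 0 (1 - γ ^ x) + γ ^ x * max 0 (1 - γ ^ i) := by
    rw [mul_max_of_nonneg _ _ hx, mul_zero, zpow_add₀ hγ0.ne']
    exact max_le (by positivity) (by
      nlinarith [le_max_right 0 (1 - γ ^ x), le_max_right 0 (γ ^ x * (1 - γ ^ i))])
  have hcocycle : (1 - γ ^ (x + i)) / (1 - γ) =
      (1 - γ ^ x) / (1 - γ) + γ ^ x * ((1 - γ ^ i) / (1 - γ)) := by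
    rw [zpow_add₀ hγ0.ne']
    ring
  simp only [scaleFun, hcocycle]
  linarith

lemma sum_Icc_neg_eq {M : Type*} [AddCommMonoid M] (l : ℕ) (F : ℤ → M) :
    ∑ i ∈ Icc (-(l : ℤ)) l, F i = ∑ i ∈ Icc 1 l, F i + F 0 + ∑ i ∈ Icc 1 l, F (-i) := by
  induction l with
  | zero => simp
  | succ l ih =>
    have hIcc : Icc (-((l + 1 : ℕ) : ℤ)) (l + 1 : ℕ) =
        insert (-((l + 1 : ℕ) : ℤ)) (insert ((l + 1 : ℕ) : ℤ) (Icc (-(l : ℤ)) l)) := by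
      ext x
      simp only [mem_Icc, mem_insert]
      omega
    rw [hIcc, sum_insert (by simp only [mem_insert, mem_Icc]; omega),
      sum_insert (by simp only [mem_Icc]; omega), ih, sum_Icc_succ_top (by omega),
      sum_Icc_succ_top (by omega)]
    abel

lemma sum_Icc_neg_mul_eq {γ : ℝ} {g : ℤ → ℝ}
    (hg_pos : ∀ x : ℤ, 0 < x → g x = ∑ i ∈ Icc 1 x.toNat, γ ^ i)
    (hg_zero : g 0 = 0)
    (hg_neg : ∀ x : ℤ, x < 0 → g x = -∑ i ∈ Icc 1 (-x).toNat, γ ^ (-(i : ℤ)))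
    (p : ℤ → ℝ) (l : ℕ) :
    ∑ i ∈ Icc (-(l : ℤ)) l, p i * g i =
      (∑ i ∈ Icc 1 l, (∑ j ∈ Icc 1 i, γ ^ j) * p i)
        - ∑ i ∈ Icc 1 l, (∑ j ∈ Icc 1 i, γ ^ (-(j : ℤ))) * p (-i) := by
  rw [sum_Icc_neg_eq, hg_zero, mul_zero, add_zero, sub_eq_add_neg, ← sum_neg_distrib]
  congr 1 <;> refine sum_congr rfl fun i hi => ?_ <;> rw [mem_Icc] at hi
  · rw [hg_pos _ (by omega), Int.toNat_natCast, mul_comm]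
  · rw [hg_neg _ (by omega), neg_neg, Int.toNat_natCast]
    ring

lemma le_sum_mul_add {G : Type*} [Add G] {s : Finset G} {p g : G → ℝ} {c : ℝ}
    (hp : ∀ i ∈ s, 0 ≤ p i) (hp_sum : ∑ i ∈ s, p i = 1) (hmean : ∑ i ∈ s, p i * g i = 0)
    {x : G} (hsub : ∀ i, c * g i ≤ g (x + i) - g x) :
    g x ≤ ∑ i ∈ s, p i * g (x + i) :=
  calc g x = ∑ i ∈ s, p i * g x + c * ∑ i ∈ s, p i * g i := by
        rw [← sum_mul, hp_sum, hmean]; ring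
    _ = ∑ i ∈ s, p i * (g x + c * g i) := by
        rw [mul_sum, ← sum_add_distrib]; exact sum_congr rfl fun i _ => by ring
    _ ≤ ∑ i ∈ s, p i * g (x + i) :=
        sum_le_sum fun i hi => mul_le_mul_of_nonneg_left (by linarith [hsub i]) (hp i hi)

section Probability

variable {Ω : Type*} {m m0 : MeasurableSpace Ω} {μ : Measure Ω}

lemma ae_abs_le_of_measure_eq_zero {ξ : Ω → ℤ} {l : ℤ}
    (h : ∀ i, l < |i| → μ {ω | ξ ω = i} = 0) : ∀ᵐ ω ∂μ, |ξ ω| ≤ l := by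
  rw [ae_iff]
  refine measure_mono_null (fun ω hω => ?_)
    (measure_iUnion_null fun i => measure_iUnion_null fun hi => h i hi)
  exact Set.mem_iUnion₂.2 ⟨ξ ω, not_le.1 hω, rfl⟩

lemma ae_abs_sum_range_le {ξ : ℕ → Ω → ℤ} {l : ℤ} (h : ∀ k, ∀ᵐ ω ∂μ, |ξ k ω| ≤ l) (n : ℕ) :
    ∀ᵐ ω ∂μ, |∑ k ∈ range n, ξ k ω| ≤ n * l := by
  filter_upwards [ae_all_iff.2 h] with ω hω
  calc |∑ k ∈ range n, ξ k ω| ≤ ∑ k ∈ range n, |ξ k ω| := abs_sum_le_sum_abs _ _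
    _ ≤ ∑ _k ∈ range n, l := sum_le_sum fun k _ => hω k
    _ = n * l := by simp

lemma integrable_comp_of_ae_abs_le [IsFiniteMeasure μ]
    {Z : Ω → ℤ} (hZ : Measurable Z) {N : ℤ} (hN : ∀ᵐ ω ∂μ, |Z ω| ≤ N) (h : ℤ → ℝ) :
    Integrable (fun ω => h (Z ω)) μ := by
  refine .of_bound (Measurable.of_discrete.comp hZ).aestronglyMeasurable
    (∑ y ∈ Icc (-N) N, ‖h y‖) ?_
  filter_upwards [hN] with ω hω
  exact single_le_sum (f := fun y => ‖h y‖) (fun _ _ => norm_nonneg _) (mem_Icc.2 (abs_le.1 hω))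

lemma condExp_comp_indep_eq_sum [IsFiniteMeasure μ] (hm : m ≤ m0)
    {α : Type*} [MeasurableSpace α] [MeasurableSingletonClass α] {ξ : Ω → α} (hξ : Measurable ξ)
    (hind : Indep (MeasurableSpace.comap ξ inferInstance) m μ) {s : Finset α}
    (hs : ∀ᵐ ω ∂μ, ξ ω ∈ s) {φ : α → Ω → ℝ} (hφ : ∀ i, StronglyMeasurable[m] (φ i))
    (hφint : ∀ i ∈ s, Integrable (φ i) μ) :
    μ[fun ω => φ (ξ ω) ω | m] =ᵐ[μ] fun ω => ∑ i ∈ s, μ.real {ω | ξ ω = i} * φ i ω := by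
  set χ : α → Ω → ℝ := fun i => {ω | ξ ω = i}.indicator 1
  have hχ_meas : ∀ i, StronglyMeasurable[MeasurableSpace.comap ξ inferInstance] (χ i) :=
    fun i => stronglyMeasurable_const.indicator ⟨{i}, measurableSet_singleton i, rfl⟩
  have hχ_int : ∀ i, Integrable (χ i) μ :=
    fun i => (integrable_const 1).indicator (hξ (measurableSet_singleton i))
  have hχ : ∀ i, μ[χ i | m] =ᵐ[μ] fun _ => μ.real {ω | ξ ω = i} := fun i =>
    (condExp_indep_eq hξ.comap_le hm (hχ_meas i) hind).trans
      (.of_forall fun _ => integral_indicator_one (hξ (measurableSet_singleton i)))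
  have hint : ∀ i ∈ s, Integrable (φ i * χ i) μ := fun i hi =>
    (hφint i hi).mul_bdd (hχ_int i).aestronglyMeasurable (c := 1) (.of_forall fun ω => by
      by_cases h : ξ ω = i <;> simp [χ, h])
  have hterm : ∀ i ∈ s, μ[φ i * χ i | m] =ᵐ[μ] fun ω => μ.real {ω | ξ ω = i} * φ i ω := by
    intro i hi
    filter_upwards [condExp_mul_of_stronglyMeasurable_left (hφ i) (hint i hi) (hχ_int i), hχ i]
      with ω h1 h2
    rw [h1, Pi.mul_apply, h2, mul_comm]
  have hdecomp : (fun ω => φ (ξ ω) ω) =ᵐ[μ] ∑ i ∈ s, φ i * χ i := by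
    filter_upwards [hs] with ω hω
    rw [Finset.sum_apply, sum_eq_single_of_mem (ξ ω) hω fun j _ hj => by simp [χ, Ne.symm hj]]
    simp [χ]
  filter_upwards [condExp_congr_ae hdecomp,
    condExp_finsetSum hint m, (Filter.eventually_all_finset s).2 hterm] with ω h1 h2 h3
  rw [h1, h2, Finset.sum_apply]
  exact sum_congr rfl h3

end Probability

section RandomWalk

variable {Ω : Type*} {step : ℕ → Ω → ℤ}

lemma measurable_sum_range_iSup_comap (n : ℕ) :
    Measurable[⨆ k ∈ range n, MeasurableSpace.comap (step k) inferInstance]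
      (fun ω => ∑ k ∈ range n, step k ω) :=
  Finset.measurable_sum _ fun k hk => Measurable.of_comap_le
    (le_iSup₂ (f := fun k (_ : k ∈ range n) => MeasurableSpace.comap (step k) inferInstance) k hk)

variable [m0 : MeasurableSpace Ω] {μ : Measure Ω}

lemma indep_comap_iSup_comap_range (hmeas : ∀ k, Measurable (step k))
    (hindep : iIndepFun step μ) (n : ℕ) :
    Indep (MeasurableSpace.comap (step n) inferInstance)
      (⨆ k ∈ range n, MeasurableSpace.comap (step k) inferInstance) μ := by
  simpa using indep_iSup_of_disjoint (fun k => (hmeas k).comap_le) hindep.iIndep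
    (S := {n}) (T := range n) (by simp)

lemma condExp_comp_sum_range_succ [IsFiniteMeasure μ] (hmeas : ∀ k, Measurable (step k))
    (hindep : iIndepFun step μ) {l : ℤ} (hbound : ∀ k, ∀ᵐ ω ∂μ, |step k ω| ≤ l)
    (h : ℤ → ℝ) (n : ℕ) :
    μ[fun ω => h (∑ k ∈ range (n + 1), step k ω) |
        ⨆ k ∈ range n, MeasurableSpace.comap (step k) inferInstance]
      =ᵐ[μ] fun ω => ∑ i ∈ Icc (-l) l,
        μ.real {ω | step n ω = i} * h (∑ k ∈ range n, step k ω + i) := by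
  simp_rw [sum_range_succ]
  refine condExp_comp_indep_eq_sum (φ := fun i ω => h (∑ k ∈ range n, step k ω + i))
    (iSup₂_le fun k _ => (hmeas k).comap_le) (hmeas n)
    (indep_comap_iSup_comap_range hmeas hindep n) ?_ (fun i => ?_) fun i _ => ?_
  · filter_upwards [hbound n] with ω hω
    exact mem_Icc.2 (abs_le.1 hω)
  · exact (Measurable.of_discrete.comp
      ((measurable_sum_range_iSup_comap n).add_const i)).stronglyMeasurable
  · exact integrable_comp_of_ae_abs_le (Finset.measurable_sum _ fun k _ => hmeas k)
      (ae_abs_sum_range_le hbound n) (fun x => h (x + i))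

end RandomWalk

theorem random_walk_scale_submartingale_general
    {Ω : Type*} [m0 : MeasurableSpace Ω] (μ : Measure Ω) [IsProbabilityMeasure μ]
    (l : ℕ)
    (p : ℤ → ℝ)
    (hp_nonneg : ∀ i, 0 ≤ p i)
    (hp_sum : ∑ i ∈ Finset.Icc (-(l : ℤ)) (l : ℤ), p i = 1)
    (hp_supp : ∀ i : ℤ, (l : ℤ) < |i| → p i = 0)
    (step : ℕ → Ω → ℤ)
    (hmeas : ∀ k, Measurable (step k))
    (hindep : iIndepFun step μ)
    (hlaw : ∀ k i, μ {ω | step k ω = i} = ENNReal.ofReal (p i))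
    (X : ℕ → Ω → ℤ)
    (hX : ∀ n ω, X n ω = ∑ k ∈ Finset.range n, step k ω)
    (f : ℝ → ℝ)
    (hf : ∀ g : ℝ, 0 < g →
      f g = (∑ i ∈ Finset.Icc 1 l, (∑ j ∈ Finset.Icc 1 i, g ^ j) * p (i : ℤ))
          - (∑ i ∈ Finset.Icc 1 l, (∑ j ∈ Finset.Icc 1 i, g ^ (-(j : ℤ))) * p (-(i : ℤ))))
    (γ : ℝ) (hγ : γ ∈ Set.Ioo (0 : ℝ) 1) (hroot : f γ = 0)
    (g : ℤ → ℝ)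
    (hg_pos : ∀ x : ℤ, 0 < x → g x = ∑ i ∈ Finset.Icc 1 x.toNat, γ ^ i)
    (hg_zero : g 0 = 0)
    (hg_neg : ∀ x : ℤ, x < 0 → g x = -∑ i ∈ Finset.Icc 1 (-x).toNat, γ ^ (-(i : ℤ)))
    (Y : ℕ → Ω → ℝ)
    (hY : ∀ n ω, Y n ω = g (X n ω))
    (F : ℕ → MeasurableSpace Ω)
    (hF : ∀ n, F n = ⨆ k ∈ Finset.range n,
      MeasurableSpace.comap (step k) inferInstance) :
    (∀ n, Integrable (Y n) μ) ∧
    (∀ n, StronglyMeasurable[F n] (Y n)) ∧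
    (∀ n, Y n ≤ᵐ[μ] μ[Y (n + 1) | F n]) ∧
    (∀ n, ∀ᵐ ω ∂μ, X n ω = 0 → (μ[Y (n + 1) | F n]) ω = Y n ω) := by
  obtain ⟨hγ0, hγ1⟩ := hγ
  have hmean : ∑ i ∈ Icc (-(l : ℤ)) l, p i * g i = 0 := by
    rw [sum_Icc_neg_mul_eq hg_pos hg_zero hg_neg, ← hf γ hγ0, hroot]
  have hsub : ∀ x i, γ ^ x * g i ≤ g (x + i) - g x := by
    rw [eq_scaleFun hγ0 hγ1 hg_pos hg_zero hg_neg]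
    exact scaleFun_add_sub_ge hγ0
  have hbound : ∀ k, ∀ᵐ ω ∂μ, |step k ω| ≤ l := fun k =>
    ae_abs_le_of_measure_eq_zero fun i hi => by rw [hlaw, hp_supp i hi, ENNReal.ofReal_zero]
  have hY' : ∀ n, Y n = fun ω => g (∑ k ∈ range n, step k ω) :=
    fun n => funext fun ω => by rw [hY, hX]
  have hcond : ∀ n, μ[Y (n + 1) | F n]
      =ᵐ[μ] fun ω => ∑ i ∈ Icc (-(l : ℤ)) l, p i * g (X n ω + i) := by
    intro n
    rw [hY', hF]
    refine (condExp_comp_sum_range_succ hmeas hindep hbound g n).trans (.of_forall fun ω => ?_)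
    simp only [measureReal_def, hlaw, ENNReal.toReal_ofReal (hp_nonneg _), hX]
  refine ⟨fun n => ?_, fun n => ?_, fun n => ?_, fun n => ?_⟩
  · rw [hY']
    exact integrable_comp_of_ae_abs_le (Finset.measurable_sum _ fun k _ => hmeas k)
      (ae_abs_sum_range_le hbound n) g
  · rw [hY', hF]
    exact (Measurable.of_discrete.comp (measurable_sum_range_iSup_comap n)).stronglyMeasurable
  · filter_upwards [hcond n] with ω hω
    rw [hω, hY]
    exact le_sum_mul_add (fun i _ => hp_nonneg i) hp_sum hmean (hsub _)
  · filter_upwards [hcond n] with ω hω h0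
    rw [hω, hY, h0, hg_zero]
    simpa using hmean

/-- **Submartingale property of the scale-transformed walk.**
With `γ ∈ (0,1)` a root of `f`, the process `Y n = g (X n)`, where `g` is the scale function
`g(x) = ∑_{i=1}^x γ^i` for `x > 0`, `g(0) = 0`, `g(x) = −∑_{i=1}^{−x} γ^{−i}` for `x < 0`,
is a submartingale with respect to the filtration `F n` generated by the first `n` steps:
each `Y n` is integrable and `F n`-measurable, `𝔼[Y (n+1) | F n] ≥ Y n` almost surely, and
the conditional-expectation inequality is an equality on the event `{X n = 0}`. -/
theorem random_walk_scale_submartingale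
    {Ω : Type*} [m0 : MeasurableSpace Ω] (μ : Measure Ω) [IsProbabilityMeasure μ]
    (l : ℕ) (hl : 0 < l)
    (p : ℤ → ℝ)
    (hp_nonneg : ∀ i, 0 ≤ p i)
    (hp_sum : ∑ i ∈ Finset.Icc (-(l : ℤ)) (l : ℤ), p i = 1)
    (hp_supp : ∀ i : ℤ, (l : ℤ) < |i| → p i = 0)
    (step : ℕ → Ω → ℤ)
    (hmeas : ∀ k, Measurable (step k))
    (hindep : iIndepFun step μ)
    (hlaw : ∀ k i, μ {ω | step k ω = i} = ENNReal.ofReal (p i))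
    (X : ℕ → Ω → ℤ)
    (hX : ∀ n ω, X n ω = ∑ k ∈ Finset.range n, step k ω)
    (f : ℝ → ℝ)
    (hf : ∀ g : ℝ, 0 < g →
      f g = (∑ i ∈ Finset.Icc 1 l, (∑ j ∈ Finset.Icc 1 i, g ^ j) * p (i : ℤ))
          - (∑ i ∈ Finset.Icc 1 l, (∑ j ∈ Finset.Icc 1 i, g ^ (-(j : ℤ))) * p (-(i : ℤ))))
    (γ : ℝ) (hγ : γ ∈ Set.Ioo (0 : ℝ) 1) (hroot : f γ = 0)
    (g : ℤ → ℝ)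
    (hg_pos : ∀ x : ℤ, 0 < x → g x = ∑ i ∈ Finset.Icc 1 x.toNat, γ ^ i)
    (hg_zero : g 0 = 0)
    (hg_neg : ∀ x : ℤ, x < 0 → g x = -∑ i ∈ Finset.Icc 1 (-x).toNat, γ ^ (-(i : ℤ)))
    (Y : ℕ → Ω → ℝ)
    (hY : ∀ n ω, Y n ω = g (X n ω))
    (F : ℕ → MeasurableSpace Ω)
    (hF : ∀ n, F n = ⨆ k ∈ Finset.range n,
      MeasurableSpace.comap (step k) inferInstance) :
    (∀ n, Integrable (Y n) μ) ∧
    (∀ n, StronglyMeasurable[F n] (Y n)) ∧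
    (∀ n, Y n ≤ᵐ[μ] μ[Y (n + 1) | F n]) ∧
    (∀ n, ∀ᵐ ω ∂μ, X n ω = 0 → (μ[Y (n + 1) | F n]) ω = Y n ω) :=
  random_walk_scale_submartingale_general (m0 := m0) μ l p hp_nonneg hp_sum hp_supp step hmeas
    hindep hlaw X hX f hf γ hγ hroot g hg_pos hg_zero hg_neg Y hY F hF
end

section
/- Suppose the drift satisfies ∑_{i=-l}^{l} i·p(i) > 0 and γ ∈ (0,1) satisfies f(γ) = 0. For positive integers ξ and μ, let T = inf{n ≥ 1 : X_n ≤ −ξ or X_n ≥ μ}. Then T is almost surely finite and the stopped value of the scale function has nonnegative expectation: 𝔼[g(X_T)] ≥ 0. -/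
/-!
The scale function has increments `γ ^ (x + 1) ≤ g (x + 1) - g x ≤ γ ^ x`, so from any state `x`
the expected increment `∑ i, p i * (g (x + i) - g x)` is at least `γ ^ x * f γ = 0`: `g (X n)` is a
submartingale for the filtration of the walk. By the strong law `X n / n` tends to the positive
drift, so the walk eventually exceeds `m` and `T` is a.s. finite. Since the steps are bounded by
`l`, the walk stopped at the exit time stays in `[-ξ - l, m + l]`, so optional stopping gives
`𝔼[g (X (T ∧ n))] ≥ g 0 = 0` and dominated convergence lets `n → ∞`.
-/

open MeasureTheory ProbabilityTheory Finset Filter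

section Scale

variable {γ : ℝ} {g : ℤ → ℝ}

lemma scale_succ_sub_scale
    (hg_pos : ∀ x : ℤ, 0 < x → g x = ∑ i ∈ Icc 1 x.toNat, γ ^ i)
    (hg_zero : g 0 = 0)
    (hg_neg : ∀ x : ℤ, x < 0 → g x = -∑ i ∈ Icc 1 (-x).toNat, γ ^ (-(i : ℤ))) (j : ℤ) :
    g (j + 1) - g j = if 0 ≤ j then γ ^ (j + 1) else γ ^ j := by
  rcases lt_trichotomy j (-1) with hj | rfl | hj
  · rw [if_neg (by omega), hg_neg j (by omega), hg_neg (j + 1) (by omega),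
      show (-j).toNat = (-(j + 1)).toNat + 1 by omega, sum_Icc_succ_top (by omega),
      show (-(((-(j + 1)).toNat + 1 : ℕ) : ℤ)) = j by omega]
    ring
  · simp [hg_zero, hg_neg]
  · obtain ⟨k, rfl⟩ : ∃ k : ℕ, j = k := ⟨j.toNat, by omega⟩
    rw [if_pos (by omega), show (k : ℤ) + 1 = (k + 1 : ℕ) by push_cast; ring, zpow_natCast,
      hg_pos _ (by omega), Int.toNat_natCast, sum_Icc_succ_top (by omega)]
    rcases k.eq_zero_or_pos with rfl | hk
    · simp [hg_zero]
    · rw [hg_pos _ (by omega), Int.toNat_natCast]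
      ring

lemma scale_succ_sub_scale_mem_Icc (hγ0 : 0 < γ) (hγ1 : γ ≤ 1)
    (hg_pos : ∀ x : ℤ, 0 < x → g x = ∑ i ∈ Icc 1 x.toNat, γ ^ i)
    (hg_zero : g 0 = 0)
    (hg_neg : ∀ x : ℤ, x < 0 → g x = -∑ i ∈ Icc 1 (-x).toNat, γ ^ (-(i : ℤ))) (j : ℤ) :
    g (j + 1) - g j ∈ Set.Icc (γ ^ (j + 1)) (γ ^ j) := by
  rw [scale_succ_sub_scale hg_pos hg_zero hg_neg j]
  split_ifs
  · exact ⟨le_rfl, zpow_le_zpow_right_of_le_one₀ hγ0 hγ1 (by omega)⟩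
  · exact ⟨zpow_le_zpow_right_of_le_one₀ hγ0 hγ1 (by omega), le_rfl⟩

lemma zpow_mul_sum_pow_le_sub (hγ : γ ≠ 0) (hinc : ∀ j, γ ^ (j + 1) ≤ g (j + 1) - g j)
    (x : ℤ) (i : ℕ) : γ ^ x * ∑ j ∈ Icc 1 i, γ ^ j ≤ g (x + i) - g x := by
  induction i with
  | zero => simp
  | succ n ih =>
    have := hinc (x + n)
    rw [sum_Icc_succ_top (by omega), mul_add, ← zpow_natCast, ← zpow_add₀ hγ,
      show x + ((n + 1 : ℕ) : ℤ) = x + n + 1 by push_cast; ring]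
    linarith

lemma sub_le_zpow_mul_sum_zpow_neg (hγ : γ ≠ 0) (hinc : ∀ j, g (j + 1) - g j ≤ γ ^ j)
    (x : ℤ) (i : ℕ) : g x - g (x - i) ≤ γ ^ x * ∑ j ∈ Icc 1 i, γ ^ (-(j : ℤ)) := by
  induction i with
  | zero => simp
  | succ n ih =>
    have := hinc (x - n - 1)
    rw [sub_add_cancel] at this
    rw [sum_Icc_succ_top (by omega), mul_add, ← zpow_add₀ hγ,
      show x - ((n + 1 : ℕ) : ℤ) = x - n - 1 by push_cast; ring,
      show x + -((n + 1 : ℕ) : ℤ) = x - n - 1 by push_cast; ring]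
    linarith

lemma sum_Icc_neg_eq_add_sum_Icc_one (l : ℕ) (F : ℤ → ℝ) :
    ∑ i ∈ Icc (-(l : ℤ)) l, F i = F 0 + ∑ i ∈ Icc 1 l, (F i + F (-(i : ℤ))) := by
  induction l with
  | zero => simp
  | succ n ih =>
    have hIcc : Icc (-((n + 1 : ℕ) : ℤ)) ((n + 1 : ℕ) : ℤ)
        = insert (-((n + 1 : ℕ) : ℤ)) (insert ((n + 1 : ℕ) : ℤ) (Icc (-(n : ℤ)) n)) := by
      ext x; simp only [mem_Icc, mem_insert]; omega
    rw [hIcc, sum_insert (by simp only [mem_insert, mem_Icc]; omega),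
      sum_insert (by simp only [mem_Icc]; omega), ih, sum_Icc_succ_top (by omega)]
    ring

lemma sum_mul_sub_nonneg_of_root (hγ : γ ≠ 0)
    (hinc : ∀ j, g (j + 1) - g j ∈ Set.Icc (γ ^ (j + 1)) (γ ^ j)) {l : ℕ} {p : ℤ → ℝ}
    (hp : ∀ i, 0 ≤ p i)
    (hroot : ∑ i ∈ Icc 1 l, (∑ j ∈ Icc 1 i, γ ^ j) * p i
      - ∑ i ∈ Icc 1 l, (∑ j ∈ Icc 1 i, γ ^ (-(j : ℤ))) * p (-(i : ℤ)) = 0) (x : ℤ) :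
    0 ≤ ∑ i ∈ Icc (-(l : ℤ)) l, p i * (g (x + i) - g x) := by
  have hterm : ∀ i ∈ Icc 1 l,
      γ ^ x * ((∑ j ∈ Icc 1 i, γ ^ j) * p i - (∑ j ∈ Icc 1 i, γ ^ (-(j : ℤ))) * p (-(i : ℤ)))
        ≤ p i * (g (x + i) - g x) + p (-(i : ℤ)) * (g (x + -(i : ℤ)) - g x) := fun i _ => by
    have hup := mul_le_mul_of_nonneg_left
      (zpow_mul_sum_pow_le_sub hγ (fun j => (hinc j).1) x i) (hp i)
    have hdown := mul_le_mul_of_nonneg_left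
      (sub_le_zpow_mul_sum_zpow_neg hγ (fun j => (hinc j).2) x i) (hp (-(i : ℤ)))
    rw [← sub_eq_add_neg]
    linarith
  calc 0 = γ ^ x * (∑ i ∈ Icc 1 l, (∑ j ∈ Icc 1 i, γ ^ j) * p i
        - ∑ i ∈ Icc 1 l, (∑ j ∈ Icc 1 i, γ ^ (-(j : ℤ))) * p (-(i : ℤ))) := by rw [hroot, mul_zero]
    _ ≤ ∑ i ∈ Icc 1 l, (p i * (g (x + i) - g x) + p (-(i : ℤ)) * (g (x + -(i : ℤ)) - g x)) := by
      rw [← sum_sub_distrib, mul_sum]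
      exact sum_le_sum hterm
    _ = ∑ i ∈ Icc (-(l : ℤ)) l, p i * (g (x + i) - g x) := by
      rw [sum_Icc_neg_eq_add_sum_Icc_one l fun i => p i * (g (x + i) - g x)]
      simp

end Scale

section Discrete

variable {Ω α β : Type*} [MeasurableSpace α] [MeasurableSingletonClass α]
  [MeasurableSpace β] [MeasurableSingletonClass β]

lemma integrable_comp_of_ae_mem_finset [Countable α] {mΩ : MeasurableSpace Ω} {ν : Measure Ω}
    [IsFiniteMeasure ν] {Y : Ω → α} {A : Finset α} (hY : Measurable Y)
    (hA : ∀ᵐ ω ∂ν, Y ω ∈ A) (h : α → ℝ) : Integrable (fun ω => h (Y ω)) ν := by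
  refine (integrable_const (∑ a ∈ A, |h a|)).mono'
    ((measurable_of_countable h).comp hY).aestronglyMeasurable ?_
  filter_upwards [hA] with ω hω
  exact single_le_sum (f := fun a => |h a|) (fun a _ => abs_nonneg _) hω

lemma integral_comp_eq_sum {mΩ : MeasurableSpace Ω} {ν : Measure Ω} [IsFiniteMeasure ν]
    {Y : Ω → α} {A : Finset α} (hY : Measurable Y) (hA : ∀ᵐ ω ∂ν, Y ω ∈ A) (h : α → ℝ) :
    ∫ ω, h (Y ω) ∂ν = ∑ a ∈ A, ν.real (Y ⁻¹' {a}) * h a := by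
  classical
  have hsum : (fun ω => h (Y ω)) =ᵐ[ν]
      fun ω => ∑ a ∈ A, (Y ⁻¹' {a}).indicator (fun _ => h a) ω := by
    filter_upwards [hA] with ω hω
    simp [Set.indicator_apply, hω]
  rw [integral_congr_ae hsum, integral_finsetSum _ fun a _ =>
    (integrable_const _).indicator (hY (measurableSet_singleton a))]
  simp_rw [integral_indicator_const _ (hY (measurableSet_singleton _)), smul_eq_mul]

lemma setIntegral_comp_indep_eq_sum {m mΩ : MeasurableSpace Ω} {μ : Measure Ω}
    [IsFiniteMeasure μ] {Z : Ω → α} {ξ : Ω → β} {A : Finset α} {B : Finset β}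
    (hm : m ≤ mΩ) (hZ : Measurable[m] Z) (hξ : Measurable ξ)
    (hind : Indep m (MeasurableSpace.comap ξ inferInstance) μ)
    (hA : ∀ᵐ ω ∂μ, Z ω ∈ A) (hB : ∀ᵐ ω ∂μ, ξ ω ∈ B) (h : α → β → ℝ) {s : Set Ω}
    (hs : MeasurableSet[m] s) :
    ∫ ω in s, h (Z ω) (ξ ω) ∂μ =
      ∑ z ∈ A, μ.real (s ∩ Z ⁻¹' {z}) * ∑ i ∈ B, μ.real (ξ ⁻¹' {i}) * h z i := by
  have hAB : ∀ᵐ ω ∂μ.restrict s, (Z ω, ξ ω) ∈ A ×ˢ B := by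
    filter_upwards [ae_restrict_of_ae hA, ae_restrict_of_ae hB] with ω hZω hξω
    exact mem_product.2 ⟨hZω, hξω⟩
  have hZξ : Measurable fun ω => (Z ω, ξ ω) := (hZ.mono hm le_rfl).prodMk hξ
  rw [integral_comp_eq_sum hZξ hAB fun q => h q.1 q.2, sum_product]
  refine sum_congr rfl fun z _ => ?_
  rw [mul_sum]
  refine sum_congr rfl fun i _ => ?_
  have hpre : (fun ω => (Z ω, ξ ω)) ⁻¹' {(z, i)} = Z ⁻¹' {z} ∩ ξ ⁻¹' {i} := by
    ext ω; simp
  have hmul : μ (s ∩ Z ⁻¹' {z} ∩ ξ ⁻¹' {i}) = μ (s ∩ Z ⁻¹' {z}) * μ (ξ ⁻¹' {i}) :=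
    (Indep_iff _ _ μ).1 hind _ _ (hs.inter (hZ (measurableSet_singleton z)))
      ⟨{i}, measurableSet_singleton i, rfl⟩
  rw [measureReal_restrict_apply (hZξ (measurableSet_singleton _)), hpre, Set.inter_comm,
    ← Set.inter_assoc, measureReal_def, hmul, ENNReal.toReal_mul, ← measureReal_def,
    ← measureReal_def, mul_assoc]

end Discrete

lemma ae_tendsto_sum_atTop_of_integral_pos {Ω : Type*} {mΩ : MeasurableSpace Ω}
    {μ : Measure Ω} {Z : ℕ → Ω → ℝ} (hint : Integrable (Z 0) μ)
    (hindep : Pairwise (Function.onFun (IndepFun · · μ) Z))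
    (hident : ∀ i, IdentDistrib (Z i) (Z 0) μ μ) (hpos : 0 < μ[Z 0]) :
    ∀ᵐ ω ∂μ, Tendsto (fun n => ∑ i ∈ range n, Z i ω) atTop atTop := by
  filter_upwards [strong_law_ae_real Z hint hindep hident] with ω hω
  refine (hω.pos_mul_atTop hpos tendsto_natCast_atTop_atTop).congr' ?_
  filter_upwards [eventually_ne_atTop 0] with n hn
  field_simp

section Stopping

variable {Ω : Type*}

lemma hittingAfter_eq_sInf_of_exists {β : Type*} {u : ℕ → Ω → β} {s : Set β} {n : ℕ} {ω : Ω}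
    (h : ∃ j, n ≤ j ∧ u j ω ∈ s) :
    hittingAfter u s n ω = ((sInf {i | n ≤ i ∧ u i ω ∈ s} : ℕ) : WithTop ℕ) :=
  if_pos h

lemma tendsto_stoppedProcess_of_eq_coe {β : Type*} [TopologicalSpace β] {u : ℕ → Ω → β}
    {τ : Ω → WithTop ℕ} {ω : Ω} {t : ℕ} (hτ : τ ω = t) :
    Tendsto (fun n => stoppedProcess u τ n ω) atTop (nhds (u t ω)) := by
  refine tendsto_atTop_of_eventually_const (i₀ := t) fun n hn => ?_
  rw [stoppedProcess_eq_of_ge (hτ ▸ WithTop.coe_le_coe.2 hn), hτ]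
  rfl

lemma stoppedProcess_hittingAfter_mem_Icc {u : ℕ → Ω → ℤ} {a b : ℤ} {l : ℕ} {ω : Ω}
    (h0 : u 0 ω ∈ Set.Ioo a b) (hinc : ∀ k, |u (k + 1) ω - u k ω| ≤ l) (n : ℕ) :
    stoppedProcess u (hittingAfter u (Set.Ioo a b)ᶜ 1) n ω ∈ Set.Icc (a - l) (b + l) := by
  set τ := hittingAfter u (Set.Ioo a b)ᶜ 1
  have hne : min (n : WithTop ℕ) (τ ω) ≠ ⊤ :=
    ne_top_of_le_ne_top WithTop.coe_ne_top (min_le_left _ _)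
  rw [stoppedProcess]
  rcases h : (min (n : WithTop ℕ) (τ ω)).untopA with _ | j
  · exact Set.Ioo_subset_Icc_self.trans (Set.Icc_subset_Icc (by omega) (by omega)) h0
  · have hjτ : (j : WithTop ℕ) < τ ω :=
      ((WithTop.lt_untopA_iff hne).1 (h ▸ Nat.lt_succ_self j)).trans_le (min_le_right _ _)
    have hj : u j ω ∈ Set.Ioo a b := by
      rcases j.eq_zero_or_pos with rfl | hj0
      · exact h0
      · simpa using notMem_of_lt_hittingAfter hjτ hj0
    have := abs_le.1 (hinc j)
    simp only [Set.mem_Ioo, Set.mem_Icc] at hj ⊢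
    omega

lemma MeasureTheory.Submartingale.integral_zero_le_of_tendsto_stoppedProcess
    {mΩ : MeasurableSpace Ω} {μ : Measure Ω} [IsFiniteMeasure μ] {ℱ : Filtration ℕ mΩ}
    {f : ℕ → Ω → ℝ} {τ : Ω → WithTop ℕ} (hf : Submartingale f ℱ μ) (hτ : IsStoppingTime ℱ τ) {C : ℝ}
    (hbdd : ∀ n, ∀ᵐ ω ∂μ, ‖(stoppedProcess f τ n) ω‖ ≤ C) {F : Ω → ℝ}
    (hlim : ∀ᵐ ω ∂μ, Tendsto (fun n => stoppedProcess f τ n ω) atTop (nhds (F ω))) :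
    ∫ ω, f 0 ω ∂μ ≤ ∫ ω, F ω ∂μ := by
  have hstopped := hf.stoppedProcess hτ
  refine ge_of_tendsto (tendsto_integral_of_dominated_convergence (fun _ => C)
    (fun n => (hstopped.integrable n).aestronglyMeasurable) (integrable_const C) hbdd hlim)
    (Eventually.of_forall fun n => ?_)
  have h0 : stoppedProcess f τ 0 = f 0 := funext fun ω => stoppedProcess_eq_of_le zero_le
  simpa [h0] using hstopped.setIntegral_le n.zero_le MeasurableSet.univ

end Stopping

def walk {Ω : Type*} (step : ℕ → Ω → ℤ) (n : ℕ) (ω : Ω) : ℤ := ∑ k ∈ range n, step k ω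

section RandomWalk

variable {Ω : Type*} {mΩ : MeasurableSpace Ω} {μ : Measure Ω} {step : ℕ → Ω → ℤ}
  {l : ℕ} {p : ℤ → ℝ}

lemma walk_zero (ω : Ω) : walk step 0 ω = 0 := by simp [walk]

lemma walk_succ (n : ℕ) (ω : Ω) : walk step (n + 1) ω = walk step n ω + step n ω := by
  simp [walk, sum_range_succ]

lemma measurable_walk (hmeas : ∀ k, Measurable (step k)) (n : ℕ) : Measurable (walk step n) :=
  Finset.measurable_sum _ fun k _ => hmeas k

abbrev walkFiltration (hmeas : ∀ k, Measurable (step k)) : Filtration ℕ mΩ :=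
  Filtration.natural (walk step) fun k => (measurable_walk hmeas k).stronglyMeasurable

lemma abs_walk_le {ω : Ω} (hstep : ∀ k, |step k ω| ≤ l) (n : ℕ) : |walk step n ω| ≤ n * l :=
  calc |walk step n ω| ≤ ∑ k ∈ range n, |step k ω| := abs_sum_le_sum_abs _ _
    _ ≤ n * l := by simpa using sum_le_sum fun k (_ : k ∈ range n) => hstep k

lemma ae_abs_step_le (hlaw : ∀ k i, μ {ω | step k ω = i} = ENNReal.ofReal (p i))
    (hp_supp : ∀ i : ℤ, (l : ℤ) < |i| → p i = 0) : ∀ᵐ ω ∂μ, ∀ k, |step k ω| ≤ l := by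
  refine ae_all_iff.2 fun k => ?_
  have hbad : {ω | ¬|step k ω| ≤ l} = ⋃ i ∈ {i : ℤ | (l : ℤ) < |i|}, {ω | step k ω = i} := by
    ext ω; simp
  rw [ae_iff, hbad, measure_biUnion_null_iff (Set.to_countable _)]
  intro i hi
  rw [hlaw, hp_supp i hi, ENNReal.ofReal_zero]

lemma measureReal_step_eq (hp_nonneg : ∀ i, 0 ≤ p i)
    (hlaw : ∀ k i, μ {ω | step k ω = i} = ENNReal.ofReal (p i)) (k : ℕ) (i : ℤ) :
    μ.real (step k ⁻¹' {i}) = p i := by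
  rw [measureReal_def, ← ENNReal.toReal_ofReal (hp_nonneg i), ← hlaw k i]
  rfl

lemma integral_step_eq [IsFiniteMeasure μ] (hmeas : ∀ k, Measurable (step k))
    (hp_nonneg : ∀ i, 0 ≤ p i) (hlaw : ∀ k i, μ {ω | step k ω = i} = ENNReal.ofReal (p i))
    (hp_supp : ∀ i : ℤ, (l : ℤ) < |i| → p i = 0) (k : ℕ) :
    ∫ ω, (step k ω : ℝ) ∂μ = ∑ i ∈ Icc (-(l : ℤ)) l, (i : ℝ) * p i := by
  have hmem : ∀ᵐ ω ∂μ, step k ω ∈ Icc (-(l : ℤ)) l := by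
    filter_upwards [ae_abs_step_le hlaw hp_supp] with ω hω
    exact mem_Icc.2 (abs_le.1 (hω k))
  rw [integral_comp_eq_sum (hmeas k) hmem]
  simp_rw [measureReal_step_eq hp_nonneg hlaw, mul_comm]

lemma identDistrib_step (hmeas : ∀ k, Measurable (step k))
    (hlaw : ∀ k i, μ {ω | step k ω = i} = ENNReal.ofReal (p i)) (k : ℕ) :
    IdentDistrib (step k) (step 0) μ μ where
  aemeasurable_fst := (hmeas k).aemeasurable
  aemeasurable_snd := (hmeas 0).aemeasurable
  map_eq := Measure.ext_of_singleton fun i => by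
    rw [Measure.map_apply (hmeas k) (measurableSet_singleton i),
      Measure.map_apply (hmeas 0) (measurableSet_singleton i)]
    exact (hlaw k i).trans (hlaw 0 i).symm

lemma ae_tendsto_walk_atTop [IsFiniteMeasure μ] (hmeas : ∀ k, Measurable (step k))
    (hindep : iIndepFun step μ) (hp_nonneg : ∀ i, 0 ≤ p i)
    (hlaw : ∀ k i, μ {ω | step k ω = i} = ENNReal.ofReal (p i))
    (hp_supp : ∀ i : ℤ, (l : ℤ) < |i| → p i = 0)
    (hdrift : 0 < ∑ i ∈ Icc (-(l : ℤ)) l, (i : ℝ) * p i) :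
    ∀ᵐ ω ∂μ, Tendsto (fun n => walk step n ω) atTop atTop := by
  have hstep : ∀ᵐ ω ∂μ, step 0 ω ∈ Icc (-(l : ℤ)) l := by
    filter_upwards [ae_abs_step_le hlaw hp_supp] with ω hω
    exact mem_Icc.2 (abs_le.1 (hω 0))
  have hslln := ae_tendsto_sum_atTop_of_integral_pos (Z := fun k ω => (step k ω : ℝ))
    (integrable_comp_of_ae_mem_finset (hmeas 0) hstep _)
    (fun i j hij => (hindep.indepFun hij).comp measurable_from_top measurable_from_top)
    (fun k => (identDistrib_step hmeas hlaw k).comp measurable_from_top)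
    (by rwa [integral_step_eq hmeas hp_nonneg hlaw hp_supp])
  filter_upwards [hslln] with ω hω
  rw [← tendsto_intCast_atTop_iff (R := ℝ)]
  simpa [walk] using hω

lemma walkFiltration_le_iSup_comap_step (hmeas : ∀ k, Measurable (step k)) (n : ℕ) :
    walkFiltration hmeas n ≤ ⨆ k ∈ Set.Iio n, MeasurableSpace.comap (step k) inferInstance := by
  refine iSup₂_le fun j hj => Measurable.comap_le ?_
  exact Finset.measurable_sum _ fun k hk => measurable_iff_comap_le.2 <|
    le_iSup₂ (f := fun k (_ : k ∈ Set.Iio n) => MeasurableSpace.comap (step k) inferInstance) k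
      (by simp only [mem_range, Set.mem_Iio] at hk ⊢; omega)

lemma indep_walkFiltration_comap_step (hmeas : ∀ k, Measurable (step k))
    (hindep : iIndepFun step μ) (n : ℕ) :
    Indep (walkFiltration hmeas n) (MeasurableSpace.comap (step n) inferInstance) μ := by
  have h := indep_iSup_of_disjoint (fun k => (hmeas k).comap_le) hindep.iIndep
    (S := Set.Iio n) (T := {n}) (by simp)
  simp only [Set.mem_singleton_iff, iSup_iSup_eq_left] at h
  exact indep_of_indep_of_le_left h (walkFiltration_le_iSup_comap_step hmeas n)

lemma submartingale_comp_walk [IsFiniteMeasure μ] (hmeas : ∀ k, Measurable (step k))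
    (hindep : iIndepFun step μ) (hp_nonneg : ∀ i, 0 ≤ p i)
    (hlaw : ∀ k i, μ {ω | step k ω = i} = ENNReal.ofReal (p i))
    (hp_supp : ∀ i : ℤ, (l : ℤ) < |i| → p i = 0) (h : ℤ → ℝ)
    (hh : ∀ x, 0 ≤ ∑ i ∈ Icc (-(l : ℤ)) l, p i * (h (x + i) - h x)) :
    Submartingale (fun n ω => h (walk step n ω)) (walkFiltration hmeas) μ := by
  set ℱ := walkFiltration hmeas
  have hadapted : ∀ n, Measurable[ℱ n] (walk step n) := fun n =>
    (Filtration.stronglyAdapted_natural (u := walk step) _ n).measurable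
  have hwalk : ∀ n : ℕ, ∀ᵐ ω ∂μ, walk step n ω ∈ Icc (-(n * l : ℤ)) (n * l) := fun n => by
    filter_upwards [ae_abs_step_le hlaw hp_supp] with ω hω
    exact mem_Icc.2 (abs_le.1 (abs_walk_le hω n))
  have hstep : ∀ n, ∀ᵐ ω ∂μ, step n ω ∈ Icc (-(l : ℤ)) l := fun n => by
    filter_upwards [ae_abs_step_le hlaw hp_supp] with ω hω
    exact mem_Icc.2 (abs_le.1 (hω n))
  have hint : ∀ n, Integrable (fun ω => h (walk step n ω)) μ := fun n =>
    integrable_comp_of_ae_mem_finset (measurable_walk hmeas n) (hwalk n) h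
  refine submartingale_of_setIntegral_le_succ
    (fun n => ((measurable_of_countable h).comp (hadapted n)).stronglyMeasurable) hint
    fun n s hs => ?_
  rw [← sub_nonneg, ← integral_sub (hint _).integrableOn (hint _).integrableOn]
  simp_rw [walk_succ]
  rw [setIntegral_comp_indep_eq_sum (ℱ.le n) (hadapted n) (hmeas n)
    (indep_walkFiltration_comap_step hmeas hindep n) (hwalk n) (hstep n)
    (fun z i => h (z + i) - h z) hs]
  refine sum_nonneg fun z _ => mul_nonneg measureReal_nonneg ?_
  simpa only [measureReal_step_eq hp_nonneg hlaw] using hh z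

lemma ae_stoppedProcess_walk_mem_Icc (hlaw : ∀ k i, μ {ω | step k ω = i} = ENNReal.ofReal (p i))
    (hp_supp : ∀ i : ℤ, (l : ℤ) < |i| → p i = 0) {a b : ℤ} (hab : 0 ∈ Set.Ioo a b) (n : ℕ) :
    ∀ᵐ ω ∂μ, stoppedProcess (walk step) (hittingAfter (walk step) (Set.Ioo a b)ᶜ 1) n ω ∈
      Set.Icc (a - l) (b + l) := by
  filter_upwards [ae_abs_step_le hlaw hp_supp] with ω hω
  exact stoppedProcess_hittingAfter_mem_Icc (by rwa [walk_zero])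
    (fun k => by simpa [walk_succ] using hω k) n

end RandomWalk

theorem random_walk_stopped_scale_expectation_nonneg_general
    {Ω : Type*} [MeasurableSpace Ω] (μ : Measure Ω) [IsProbabilityMeasure μ]
    (l : ℕ)
    (p : ℤ → ℝ)
    (hp_nonneg : ∀ i, 0 ≤ p i)
    (hp_supp : ∀ i : ℤ, (l : ℤ) < |i| → p i = 0)
    (step : ℕ → Ω → ℤ)
    (hmeas : ∀ k, Measurable (step k))
    (hindep : iIndepFun step μ)
    (hlaw : ∀ k i, μ {ω | step k ω = i} = ENNReal.ofReal (p i))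
    (X : ℕ → Ω → ℤ)
    (hX : ∀ n ω, X n ω = ∑ k ∈ Finset.range n, step k ω)
    (hdrift : 0 < ∑ i ∈ Finset.Icc (-(l : ℤ)) (l : ℤ), (i : ℝ) * p i)
    (f : ℝ → ℝ)
    (hf : ∀ g : ℝ, 0 < g →
      f g = (∑ i ∈ Finset.Icc 1 l, (∑ j ∈ Finset.Icc 1 i, g ^ j) * p (i : ℤ))
          - (∑ i ∈ Finset.Icc 1 l, (∑ j ∈ Finset.Icc 1 i, g ^ (-(j : ℤ))) * p (-(i : ℤ))))
    (γ : ℝ) (hγ : γ ∈ Set.Ioo (0 : ℝ) 1) (hroot : f γ = 0)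
    (g : ℤ → ℝ)
    (hg_pos : ∀ x : ℤ, 0 < x → g x = ∑ i ∈ Finset.Icc 1 x.toNat, γ ^ i)
    (hg_zero : g 0 = 0)
    (hg_neg : ∀ x : ℤ, x < 0 → g x = -∑ i ∈ Finset.Icc 1 (-x).toNat, γ ^ (-(i : ℤ)))
    (ξ m : ℕ) (hξ : 0 < ξ) (hm : 0 < m)
    (T : Ω → ℕ)
    (hT : ∀ ω, T ω = sInf {n : ℕ | 1 ≤ n ∧ (X n ω ≤ -(ξ : ℤ) ∨ (m : ℤ) ≤ X n ω)}) :
    μ {ω | ∃ n ≥ 1, X n ω ≤ -(ξ : ℤ) ∨ (m : ℤ) ≤ X n ω} = 1 ∧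
    0 ≤ ∫ ω, g (X (T ω) ω) ∂μ := by
  obtain rfl : X = walk step := funext₂ hX
  have hexit : ∀ᵐ ω ∂μ, ∃ n ≥ 1, walk step n ω ≤ -(ξ : ℤ) ∨ (m : ℤ) ≤ walk step n ω := by
    filter_upwards [ae_tendsto_walk_atTop hmeas hindep hp_nonneg hlaw hp_supp hdrift] with ω hω
    obtain ⟨n, hnm, hn1⟩ := ((hω.eventually_ge_atTop m).and (eventually_ge_atTop 1)).exists
    exact ⟨n, hn1, Or.inr hnm⟩
  refine ⟨(measure_congr (ae_eq_univ.2 (ae_iff.1 hexit))).trans measure_univ, ?_⟩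
  have hsub := submartingale_comp_walk hmeas hindep hp_nonneg hlaw hp_supp g
    (sum_mul_sub_nonneg_of_root hγ.1.ne'
      (scale_succ_sub_scale_mem_Icc hγ.1 hγ.2.le hg_pos hg_zero hg_neg) hp_nonneg
      ((hf γ hγ.1).symm.trans hroot))
  -- `T` is not a stopping time (it is `sInf ∅ = 0` where the walk never exits), but this
  -- hitting time is, and the two agree on the exit event.
  set τ := hittingAfter (walk step) (Set.Ioo (-(ξ : ℤ)) m)ᶜ 1
  have hτ : IsStoppingTime (walkFiltration hmeas) τ :=
    (Filtration.stronglyAdapted_natural _).adapted.isStoppingTime_hittingAfter .of_discrete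
  have hτT : ∀ ω, (∃ n ≥ 1, walk step n ω ≤ -(ξ : ℤ) ∨ (m : ℤ) ≤ walk step n ω) →
      τ ω = T ω := by
    rintro ω ⟨n, hn1, hn⟩
    have hS : ∀ x : ℤ, x ∈ (Set.Ioo (-(ξ : ℤ)) m)ᶜ ↔ x ≤ -(ξ : ℤ) ∨ (m : ℤ) ≤ x := fun x => by
      simp only [Set.mem_compl_iff, Set.mem_Ioo, not_and_or, not_lt]
    simp only [τ, hittingAfter_eq_sInf_of_exists ⟨n, hn1, (hS _).2 hn⟩, hS, hT]
  have hbdd : ∀ n, ∀ᵐ ω ∂μ, ‖(stoppedProcess (fun n ω => g (walk step n ω)) τ n) ω‖ ≤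
      ∑ z ∈ Icc (-(ξ : ℤ) - l) (m + l), ‖g z‖ := fun n => by
    filter_upwards [ae_stoppedProcess_walk_mem_Icc hlaw hp_supp (a := -(ξ : ℤ)) (b := m)
      (by simp only [Set.mem_Ioo]; omega) n] with ω hω
    exact single_le_sum (f := fun z => ‖g z‖) (fun _ _ => norm_nonneg _) (mem_Icc.2 hω)
  have hlim : ∀ᵐ ω ∂μ, Tendsto (fun n => stoppedProcess (fun n ω => g (walk step n ω)) τ n ω)
      atTop (nhds (g (walk step (T ω) ω))) := by
    filter_upwards [hexit] with ω hω
    exact tendsto_stoppedProcess_of_eq_coe (hτT ω hω)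
  simpa [walk_zero, hg_zero] using hsub.integral_zero_le_of_tendsto_stoppedProcess hτ hbdd hlim

/-- **Optional stopping bound for the scale-transformed walk.**
Under positive drift and with `γ ∈ (0,1)` a root of `f`, for positive integers `ξ` and `m`
the two-sided exit time `T ω = inf{n ≥ 1 : X n ω ≤ −ξ or X n ω ≥ m}` is almost surely
finite, and the stopped value of the scale function `g` has nonnegative expectation,
`𝔼[g (X_T)] ≥ 0`. -/
theorem random_walk_stopped_scale_expectation_nonneg
    {Ω : Type*} [MeasurableSpace Ω] (μ : Measure Ω) [IsProbabilityMeasure μ]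
    (l : ℕ) (hl : 0 < l)
    (p : ℤ → ℝ)
    (hp_nonneg : ∀ i, 0 ≤ p i)
    (hp_sum : ∑ i ∈ Finset.Icc (-(l : ℤ)) (l : ℤ), p i = 1)
    (hp_supp : ∀ i : ℤ, (l : ℤ) < |i| → p i = 0)
    (step : ℕ → Ω → ℤ)
    (hmeas : ∀ k, Measurable (step k))
    (hindep : iIndepFun step μ)
    (hlaw : ∀ k i, μ {ω | step k ω = i} = ENNReal.ofReal (p i))
    (X : ℕ → Ω → ℤ)
    (hX : ∀ n ω, X n ω = ∑ k ∈ Finset.range n, step k ω)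
    (hdrift : 0 < ∑ i ∈ Finset.Icc (-(l : ℤ)) (l : ℤ), (i : ℝ) * p i)
    (f : ℝ → ℝ)
    (hf : ∀ g : ℝ, 0 < g →
      f g = (∑ i ∈ Finset.Icc 1 l, (∑ j ∈ Finset.Icc 1 i, g ^ j) * p (i : ℤ))
          - (∑ i ∈ Finset.Icc 1 l, (∑ j ∈ Finset.Icc 1 i, g ^ (-(j : ℤ))) * p (-(i : ℤ))))
    (γ : ℝ) (hγ : γ ∈ Set.Ioo (0 : ℝ) 1) (hroot : f γ = 0)
    (g : ℤ → ℝ)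
    (hg_pos : ∀ x : ℤ, 0 < x → g x = ∑ i ∈ Finset.Icc 1 x.toNat, γ ^ i)
    (hg_zero : g 0 = 0)
    (hg_neg : ∀ x : ℤ, x < 0 → g x = -∑ i ∈ Finset.Icc 1 (-x).toNat, γ ^ (-(i : ℤ)))
    (ξ m : ℕ) (hξ : 0 < ξ) (hm : 0 < m)
    (T : Ω → ℕ)
    (hT : ∀ ω, T ω = sInf {n : ℕ | 1 ≤ n ∧ (X n ω ≤ -(ξ : ℤ) ∨ (m : ℤ) ≤ X n ω)}) :
    μ {ω | ∃ n ≥ 1, X n ω ≤ -(ξ : ℤ) ∨ (m : ℤ) ≤ X n ω} = 1 ∧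
    0 ≤ ∫ ω, g (X (T ω) ω) ∂μ :=
  random_walk_stopped_scale_expectation_nonneg_general μ l p hp_nonneg hp_supp step hmeas hindep
    hlaw X hX hdrift f hf γ hγ hroot g hg_pos hg_zero hg_neg ξ m hξ hm T hT
end
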